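/- Two-sided Worpitzky-like identity: for every n ≥ 1 and all nonnegative integers k and l, C(kl+n-1, n) = Σ_{i,j=1}^{n} A_{n,i,j} · C(k+n-i, n) · C(l+n-j, n), where C(m,n) denotes the binomial coefficient. -/

import Mathlib

/-- The descent number of a permutation of `Fin n`. -/
def des {n : ℕ} (w : Equiv.Perm (Fin n)) : ℕ :=
  (Finset.univ.filter fun r : Fin n =>
    ∃ s : Fin n, (s : ℕ) = (r : ℕ) + 1 ∧ w s < w r).card

/-- The two-sided Eulerian number `A_{n,i,j}`: the number of permutations `w`
of `Fin n` with `des w⁻¹ = i - 1` and `des w = j - 1`. -/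
def twoSidedEulerianNum (n i j : ℕ) : ℕ :=
  (Finset.univ.filter fun w : Equiv.Perm (Fin n) =>
    des w⁻¹ = i - 1 ∧ des w = j - 1).card

/-!
Both sides count weakly increasing maps `f : Fin n → Fin (k * l)`, of which there are
`C(kl + n - 1, n)`. Writing `f r = c r * l + y r`, the map `f` is monotone iff `c` is monotone and
strictly increases at every descent of `y` (lexicographic order on `Fin k × Fin l`). Group the pairs
`(c, y)` by the stable sorting permutation `w = sort y`: the descents of `y` are those of `w⁻¹`, and
`y ↦ y ∘ w` identifies the tuples sorted by `w` with the monotone maps that are strict at the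
descents of `w`. Monotone maps `Fin n → Fin m` strict at `d` prescribed positions number
`C(m + n - 1 - d, n)`: adding to `f r` the number of non-strict positions before `r` makes them
strictly increasing maps into `Fin (m + n - 1 - d)`. Hence the count is
`∑_w C(k + n - 1 - des w⁻¹, n) C(l + n - 1 - des w, n)`, which is the right-hand side grouped
by `(des w⁻¹, des w)`.
-/

open Finset

variable {n : ℕ}

section LinearOrder

variable {α β : Type*} [LinearOrder α] [LinearOrder β]

def descents (f : Fin (n + 1) → α) : Finset (Fin n) :=
  {i | f i.succ < f i.castSucc}

def MonotoneStrictAt (D : Finset (Fin n)) (f : Fin (n + 1) → α) : Prop :=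
  Monotone f ∧ ∀ i ∈ D, f i.castSucc < f i.succ

lemma mem_descents {f : Fin (n + 1) → α} {i : Fin n} :
    i ∈ descents f ↔ f i.succ < f i.castSucc := by
  simp [descents]

lemma monotoneStrictAt_iff {D : Finset (Fin n)} {f : Fin (n + 1) → α} :
    MonotoneStrictAt D f ↔
      ∀ i, f i.castSucc ≤ f i.succ ∧ (i ∈ D → f i.castSucc < f i.succ) := by
  rw [MonotoneStrictAt, Fin.monotone_iff_le_succ, forall_and]

instance (D : Finset (Fin n)) : DecidablePred (MonotoneStrictAt (α := α) D) :=
  fun _ => decidable_of_iff _ monotoneStrictAt_iff.symm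

lemma des_eq_card_descents (w : Equiv.Perm (Fin (n + 1))) : des w = #(descents w) := by
  rw [des, ← card_map (s := descents w) Fin.castSuccEmb]
  congr 1
  ext r
  simp only [mem_filter, mem_univ, true_and, mem_map, mem_descents, Fin.coe_castSuccEmb]
  constructor
  · rintro ⟨s, hs, hlt⟩
    have hr : (r : ℕ) < n := by have := s.isLt; omega
    obtain rfl : s = Fin.succ ⟨r, hr⟩ := Fin.ext hs
    exact ⟨⟨r, hr⟩, hlt, rfl⟩
  · rintro ⟨i, hi, rfl⟩
    exact ⟨i.succ, by simp, hi⟩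

lemma des_le (w : Equiv.Perm (Fin (n + 1))) : des w ≤ n :=
  des_eq_card_descents w ▸ card_le_univ _ |>.trans_eq (Fintype.card_fin n)

lemma monotone_toLex_iff {c : Fin (n + 1) → α} {y : Fin (n + 1) → β} :
    Monotone (fun r => toLex (c r, y r)) ↔ MonotoneStrictAt (descents y) c := by
  rw [Fin.monotone_iff_le_succ, monotoneStrictAt_iff]
  refine forall_congr' fun i => ?_
  rw [Prod.Lex.toLex_le_toLex', mem_descents]
  grind

namespace Tuple

lemma eq_sort_iff_strictMono_toLex {y : Fin n → α} {σ : Equiv.Perm (Fin n)} :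
    σ = sort y ↔ StrictMono (fun t => toLex (y (σ t), σ t)) :=
  eq_sort_iff'

lemma eq_sort_iff_monotoneStrictAt {y : Fin (n + 1) → α} {σ : Equiv.Perm (Fin (n + 1))} :
    σ = sort y ↔ MonotoneStrictAt (descents σ) (y ∘ σ) := by
  rw [eq_sort_iff_strictMono_toLex, Fin.strictMono_iff_lt_succ, monotoneStrictAt_iff]
  refine forall_congr' fun i => ?_
  have hne : σ i.castSucc ≠ σ i.succ := σ.injective.ne Fin.castSucc_lt_succ.ne
  rw [Prod.Lex.toLex_lt_toLex', mem_descents, Function.comp_apply, Function.comp_apply]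
  grind

lemma descents_sort_inv (y : Fin (n + 1) → α) : descents ⇑(sort y)⁻¹ = descents y := by
  ext i
  have hsort := eq_sort_iff_strictMono_toLex.1 (rfl : sort y = sort y)
  rw [mem_descents, mem_descents, ← hsort.lt_iff_lt, Prod.Lex.toLex_lt_toLex']
  simp only [Equiv.Perm.coe_inv, Equiv.apply_symm_apply]
  grind

end Tuple

end LinearOrder

lemma strictMono_finProdFinEquiv_ofLex {k l : ℕ} :
    StrictMono fun p : Fin k ×ₗ Fin l => finProdFinEquiv (ofLex p) := by
  intro p q h
  rw [Prod.Lex.lt_iff] at h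
  simp only [Fin.lt_def, finProdFinEquiv_apply_val]
  rcases h with h | ⟨h, h'⟩
  · have : l * ((ofLex p).1 + 1) ≤ l * (ofLex q).1 := Nat.mul_le_mul_left _ h
    have := (ofLex p).2.isLt
    rw [Fin.lt_def] at h
    nlinarith
  · rw [h]
    exact Nat.add_lt_add_right h' _

lemma card_monotone_fin_mul_eq_card_monotoneStrictAt_descents (k l : ℕ) :
    #{f : Fin (n + 1) → Fin (k * l) | Monotone f} =
      #{p : (Fin (n + 1) → Fin k) × (Fin (n + 1) → Fin l) |
        MonotoneStrictAt (descents p.2) p.1} := by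
  symm
  refine card_equiv ((Equiv.arrowProdEquivProdArrow _ _ _).symm.trans
    (Equiv.arrowCongr (.refl _) finProdFinEquiv)) fun p => ?_
  rw [mem_filter, mem_filter, ← monotone_toLex_iff]
  change _ ↔ _ ∧ Monotone fun r => finProdFinEquiv (ofLex (toLex (p.1 r, p.2 r)))
  simp only [mem_univ, true_and, Monotone, strictMono_finProdFinEquiv_ofLex.le_iff_le]

section Fintype

variable {α β : Type*} [LinearOrder α] [LinearOrder β] [Fintype α] [Fintype β]

lemma card_sort_eq_card_monotoneStrictAt (w : Equiv.Perm (Fin (n + 1))) :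
    #{y : Fin (n + 1) → α | Tuple.sort y = w} =
      #{d : Fin (n + 1) → α | MonotoneStrictAt (descents w) d} :=
  card_equiv (w.symm.arrowCongr (.refl α)) fun y => by
    rw [mem_filter, mem_filter, eq_comm, Tuple.eq_sort_iff_monotoneStrictAt]
    simp only [mem_univ, true_and]
    rfl

lemma card_monotoneStrictAt_descents_eq_sum :
    #{p : (Fin (n + 1) → α) × (Fin (n + 1) → β) | MonotoneStrictAt (descents p.2) p.1} =
      ∑ w : Equiv.Perm (Fin (n + 1)),
        #{c : Fin (n + 1) → α | MonotoneStrictAt (descents ⇑w⁻¹) c} *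
          #{y : Fin (n + 1) → β | Tuple.sort y = w} := by
  rw [card_eq_sum_card_fiberwise (f := fun p => Tuple.sort p.2) (t := univ)
    fun _ _ => mem_coe.2 (mem_univ _)]
  refine sum_congr rfl fun w _ => ?_
  rw [← card_product]
  congr 1
  ext ⟨c, y⟩
  simp only [mem_filter, mem_univ, true_and, mem_product]
  constructor
  · rintro ⟨h, rfl⟩
    exact ⟨by rwa [Tuple.descents_sort_inv], rfl⟩
  · rintro ⟨h, rfl⟩
    exact ⟨by rwa [Tuple.descents_sort_inv] at h, rfl⟩

end Fintype

lemma card_filter_strictMono (k m : ℕ) : #{g : Fin k → Fin m | StrictMono g} = m.choose k := by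
  rw [← Fintype.card_subtype, ← Nat.card_eq_fintype_card]
  calc Nat.card {g : Fin k → Fin m // StrictMono g}
      = Nat.card (Fin k ↪o Fin m) :=
        Nat.card_congr
          { toFun g := OrderEmbedding.ofStrictMono g.1 g.2
            invFun e := ⟨e, e.strictMono⟩
            left_inv _ := rfl
            right_inv _ := rfl }
    _ = Nat.card (Set.powersetCard (Fin m) k) := Nat.card_congr Set.powersetCard.ofFinEmbEquiv
    _ = m.choose k := by rw [Set.powersetCard.card, Nat.card_eq_fintype_card, Fintype.card_fin]

/-- Adding this count to a monotone map that is strict on `D` makes it strictly monotone. -/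
def numNotMemBefore (D : Finset (Fin n)) (r : Fin (n + 1)) : ℕ :=
  #{i ∈ Dᶜ | i.castSucc < r}

lemma numNotMemBefore_zero (D : Finset (Fin n)) : numNotMemBefore D 0 = 0 := by
  simp [numNotMemBefore]

lemma numNotMemBefore_succ (D : Finset (Fin n)) (i : Fin n) :
    numNotMemBefore D i.succ = numNotMemBefore D i.castSucc + if i ∈ D then 0 else 1 := by
  have hsplit : {j ∈ Dᶜ | j.castSucc < i.succ} =
      {j ∈ Dᶜ | j.castSucc < i.castSucc} ∪ {j ∈ Dᶜ | j = i} := by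
    ext j
    simp only [mem_filter, mem_union, Fin.castSucc_lt_succ_iff, Fin.castSucc_lt_castSucc_iff,
      le_iff_lt_or_eq, and_or_left]
  rw [numNotMemBefore, hsplit, card_union_of_disjoint, filter_eq', numNotMemBefore]
  · split_ifs <;> simp_all
  · exact disjoint_filter.2 fun j _ hj hji => (hji ▸ hj).false

lemma numNotMemBefore_le (D : Finset (Fin n)) (r : Fin (n + 1)) :
    numNotMemBefore D r ≤ n - #D :=
  (card_filter_le _ _).trans_eq (by rw [card_compl, Fintype.card_fin])

lemma numNotMemBefore_last (D : Finset (Fin n)) : numNotMemBefore D (Fin.last n) = n - #D := by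
  rw [numNotMemBefore, filter_true_of_mem fun i _ => Fin.castSucc_lt_last i, card_compl,
    Fintype.card_fin]

lemma monotoneStrictAt_iff_strictMono_add {D : Finset (Fin n)} {f : Fin (n + 1) → ℕ} :
    MonotoneStrictAt D f ↔ StrictMono fun r => f r + numNotMemBefore D r := by
  rw [monotoneStrictAt_iff, Fin.strictMono_iff_lt_succ]
  refine forall_congr' fun i => ?_
  rw [numNotMemBefore_succ]
  split_ifs with h <;> simp only [h, true_implies, false_implies, and_true] <;> omega

lemma numNotMemBefore_le_of_strictMono (D : Finset (Fin n)) {g : Fin (n + 1) → ℕ}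
    (hg : StrictMono g) (r : Fin (n + 1)) : numNotMemBefore D r ≤ g r := by
  induction r using Fin.induction with
  | zero => simp [numNotMemBefore_zero]
  | succ i ih =>
    have := hg (Fin.castSucc_lt_succ (i := i))
    rw [numNotMemBefore_succ]
    split_ifs <;> omega

lemma StrictMono.monotoneStrictAt_sub_numNotMemBefore (D : Finset (Fin n))
    {g : Fin (n + 1) → ℕ} (hg : StrictMono g) :
    MonotoneStrictAt D fun r => g r - numNotMemBefore D r := by
  rw [monotoneStrictAt_iff_strictMono_add]
  simpa only [Nat.sub_add_cancel (numNotMemBefore_le_of_strictMono D hg _)] using hg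

lemma card_monotoneStrictAt (D : Finset (Fin n)) (m : ℕ) :
    #{f : Fin (n + 1) → Fin m | MonotoneStrictAt D f} = (m + n - #D).choose (n + 1) := by
  have hD : #D ≤ n := (card_le_univ D).trans_eq (Fintype.card_fin n)
  rw [← card_filter_strictMono]
  refine card_bij' (fun f _ r => ⟨f r + numNotMemBefore D r, ?_⟩)
    (fun g hg r => ⟨g r - numNotMemBefore D r, ?_⟩) (fun f hf => ?_) (fun g hg => ?_)
    (fun f _ => ?_) (fun g hg => ?_)
  · have := (f r).isLt
    have := numNotMemBefore_le D r
    omega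
  · have hg' : StrictMono fun r => (g r : ℕ) := (mem_filter.1 hg).2
    have hmono : (g r : ℕ) - numNotMemBefore D r ≤
        g (Fin.last n) - numNotMemBefore D (Fin.last n) :=
      (hg'.monotoneStrictAt_sub_numNotMemBefore D).1 (Fin.le_last r)
    have := (g (Fin.last n)).isLt
    have := numNotMemBefore_last D
    have := numNotMemBefore_le_of_strictMono D hg' (Fin.last n)
    omega
  · exact mem_filter.2 ⟨mem_univ _, monotoneStrictAt_iff_strictMono_add.1 (mem_filter.1 hf).2⟩
  · exact mem_filter.2 ⟨mem_univ _, StrictMono.monotoneStrictAt_sub_numNotMemBefore D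
      (g := fun r => (g r : ℕ)) (mem_filter.1 hg).2⟩
  · ext r
    simp
  · ext r
    simp [Nat.sub_add_cancel (numNotMemBefore_le_of_strictMono D
      (g := fun r => (g r : ℕ)) (mem_filter.1 hg).2 r)]

lemma choose_mul_add_eq_sum_perm (n k l : ℕ) :
    (k * l + n).choose (n + 1) =
      ∑ w : Equiv.Perm (Fin (n + 1)),
        (k + n - des w⁻¹).choose (n + 1) * (l + n - des w).choose (n + 1) := by
  calc (k * l + n).choose (n + 1)
      = #{f : Fin (n + 1) → Fin (k * l) | Monotone f} := by
        simpa [MonotoneStrictAt] using (card_monotoneStrictAt ∅ (k * l)).symm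
    _ = _ := card_monotone_fin_mul_eq_card_monotoneStrictAt_descents k l
    _ = _ := card_monotoneStrictAt_descents_eq_sum
    _ = _ := by
        simp_rw [card_sort_eq_card_monotoneStrictAt, card_monotoneStrictAt, des_eq_card_descents]

lemma sum_twoSidedEulerianNum_smul {M : Type*} [AddCommMonoid M] (F : ℕ → ℕ → M) :
    ∑ i ∈ Icc 1 (n + 1), ∑ j ∈ Icc 1 (n + 1), twoSidedEulerianNum (n + 1) i j • F i j =
      ∑ w : Equiv.Perm (Fin (n + 1)), F (des w⁻¹ + 1) (des w + 1) := by
  have hmaps : ∀ w ∈ (univ : Finset (Equiv.Perm (Fin (n + 1)))),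
      (des w⁻¹ + 1, des w + 1) ∈ Icc 1 (n + 1) ×ˢ Icc 1 (n + 1) := fun w _ => by
    simp [des_le]
  rw [← sum_fiberwise_of_maps_to' hmaps (fun ij => F ij.1 ij.2), sum_product]
  refine sum_congr rfl fun i hi => sum_congr rfl fun j hj => ?_
  rw [sum_const, twoSidedEulerianNum]
  congr 2
  ext w
  simp only [mem_filter, mem_univ, true_and, Prod.mk.injEq]
  rw [mem_Icc] at hi hj
  omega

/-- The two-sided Worpitzky-like identity:
`C(kl+n-1, n) = ∑_{i,j=1}^n A_{n,i,j} C(k+n-i, n) C(l+n-j, n)`. -/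
theorem twoSided_worpitzky (n k l : ℕ) (hn : 1 ≤ n) :
    Nat.choose (k * l + n - 1) n =
      ∑ i ∈ Finset.Icc 1 n, ∑ j ∈ Finset.Icc 1 n,
        twoSidedEulerianNum n i j * Nat.choose (k + n - i) n *
          Nat.choose (l + n - j) n := by
  obtain ⟨n, rfl⟩ := Nat.exists_eq_add_of_le' hn
  have hsum := sum_twoSidedEulerianNum_smul (n := n) fun i j =>
    (k + (n + 1) - i).choose (n + 1) * (l + (n + 1) - j).choose (n + 1)
  simp only [smul_eq_mul, ← mul_assoc, ← add_assoc, Nat.add_sub_add_right] at hsum ⊢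
  rw [hsum, Nat.add_sub_cancel, choose_mul_add_eq_sum_perm]
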